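/- arXiv:1606.03167 — 5 statements merged into one kernel-verified Lean document; each statement's English description precedes it below -/
import Mathlib

section
/- Let S be Hermitian positive-semidefinite and N = diag(I_D, -I_D). If x is an eigenvector of N·S with eigenvalue ω > 0, then x† N x > 0 (the solution is normalizable with positive norm). -/
open Matrix
open scoped ComplexOrder

theorem Matrix.fromBlocks_one_zero_zero_neg_one_mul_self {m n R : Type*} [Fintype m] [Fintype n]
    [DecidableEq m] [DecidableEq n] [Ring R] :
    (fromBlocks 1 0 0 (-1) : Matrix (m ⊕ n) (m ⊕ n) R) * fromBlocks 1 0 0 (-1) = 1 := by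
  simp [fromBlocks_multiply]

/-- Pairing the eigen-equation with `x` gives `x† S x = ω · x† N x`, so positivity of `S`
forces `x† N x ≥ 0`; equality would make `S x = 0`, hence `N x = 0`, hence `x = 0`. -/
theorem Matrix.PosSemidef.dotProduct_mulVec_pos_of_mulVec_eq_smul {n 𝕜 : Type*} [Fintype n]
    [DecidableEq n] [RCLike 𝕜] {S N : Matrix n n 𝕜} (hS : S.PosSemidef) (hN : IsUnit N)
    {ω : ℝ} (hω : 0 < ω) {x : n → 𝕜} (hx : x ≠ 0) (heig : S *ᵥ x = (ω : 𝕜) • N *ᵥ x) :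
    0 < star x ⬝ᵥ N *ᵥ x := by
  have hω' : (0 : 𝕜) < ω := by exact_mod_cast hω
  have hquad : star x ⬝ᵥ S *ᵥ x = ω * (star x ⬝ᵥ N *ᵥ x) := by
    rw [heig, dotProduct_smul, smul_eq_mul]
  have hnonneg : 0 ≤ star x ⬝ᵥ N *ᵥ x := by
    refine le_of_mul_le_mul_left ?_ hω'
    rw [mul_zero, ← hquad]
    exact hS.dotProduct_mulVec_nonneg x
  refine hnonneg.lt_of_ne fun hzero => hx ?_
  have hSx : S *ᵥ x = 0 := by
    rw [← hS.dotProduct_mulVec_zero_iff, hquad, ← hzero, mul_zero]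
  have hNx : N *ᵥ x = 0 :=
    (smul_eq_zero.mp (heig.symm.trans hSx)).resolve_left hω'.ne'
  exact mulVec_injective_iff_isUnit.mpr hN (by rw [hNx, mulVec_zero])

theorem stmt_1_general {D : ℕ}
    (S N : Matrix (Fin D ⊕ Fin D) (Fin D ⊕ Fin D) ℂ)
    (hS : S.PosSemidef)
    (hN : N = Matrix.fromBlocks 1 0 0 (-1))
    (ω : ℝ) (hω : 0 < ω)
    (x : Fin D ⊕ Fin D → ℂ) (hx : x ≠ 0)
    (heig : S.mulVec x = (ω : ℂ) • N.mulVec x) :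
    0 < star x ⬝ᵥ N.mulVec x := by
  have hNunit : IsUnit N :=
    IsUnit.of_mul_eq_one N (hN ▸ fromBlocks_one_zero_zero_neg_one_mul_self)
  exact hS.dotProduct_mulVec_pos_of_mulVec_eq_smul hNunit hω hx heig

theorem stmt_1 {D : ℕ} (hD : 0 < D)
    (S N : Matrix (Fin D ⊕ Fin D) (Fin D ⊕ Fin D) ℂ)
    (hS : S.PosSemidef)
    (hN : N = Matrix.fromBlocks 1 0 0 (-1))
    (ω : ℝ) (hω : 0 < ω)
    (x : Fin D ⊕ Fin D → ℂ) (hx : x ≠ 0)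
    (heig : S.mulVec x = (ω : ℂ) • N.mulVec x) :
    0 < star x ⬝ᵥ N.mulVec x :=
  stmt_1_general S N hS hN ω hω x hx heig
end

section
/- Let S be Hermitian positive-semidefinite and N = diag(I_D, -I_D). If x ∈ Ker(S) with x ≠ 0 and ξ₂ satisfies S ξ₂ = i c N x for some nonzero c ∈ ℂ, then there is no ξ₃ with S ξ₃ = i c' N ξ₂ + i c'' N x for complex c', c'' with c' ≠ 0 (i.e., the Jordan chain cannot be extended to length three). -/
/-!
Pairing `S ξ₃ = b N ξ₂ + d N x` and `S ξ₂ = a N x` with `x` and using `x† S = 0` gives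
`x† N x = 0` and then `x† N ξ₂ = 0`. Since `N` is Hermitian, `ξ₂† S ξ₂ = a ξ₂† N x = 0`, so by
positivity `S ξ₂ = 0`, i.e. `N x = 0`, which is impossible for an invertible `N` and `x ≠ 0`.
-/

open Matrix
open scoped ComplexOrder

namespace Matrix

variable {n 𝕜 : Type*} [Fintype n] [RCLike 𝕜]

lemma IsHermitian.star_dotProduct_mulVec {M : Matrix n n 𝕜} (hM : M.IsHermitian)
    (u v : n → 𝕜) : star u ⬝ᵥ M *ᵥ v = star (star v ⬝ᵥ M *ᵥ u) := by
  rw [star_dotProduct, star_mulVec, hM.eq, dotProduct_mulVec]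

lemma IsHermitian.star_dotProduct_mulVec_eq_zero {M : Matrix n n 𝕜} (hM : M.IsHermitian)
    {u : n → 𝕜} (hu : M *ᵥ u = 0) (v : n → 𝕜) : star u ⬝ᵥ M *ᵥ v = 0 := by
  rw [hM.star_dotProduct_mulVec, hu, dotProduct_zero, star_zero]

/-- A Jordan chain `x, ξ₂, ξ₃` of `N S` at the eigenvalue `0` (up to nonzero rescalings) forces
`N x = 0`. -/
theorem mulVec_eq_zero_of_jordan_chain {S N : Matrix n n 𝕜} (hS : S.PosSemidef)
    (hN : N.IsHermitian) {x ξ₂ ξ₃ : n → 𝕜} {a b d : 𝕜} (ha : a ≠ 0) (hb : b ≠ 0)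
    (hx : S *ᵥ x = 0) (hξ₂ : S *ᵥ ξ₂ = a • N *ᵥ x)
    (hξ₃ : S *ᵥ ξ₃ = b • N *ᵥ ξ₂ + d • N *ᵥ x) : N *ᵥ x = 0 := by
  have hxS := hS.isHermitian.star_dotProduct_mulVec_eq_zero hx
  have hxNx : star x ⬝ᵥ N *ᵥ x = 0 := by
    have h := hxS ξ₂
    rw [hξ₂, dotProduct_smul, smul_eq_mul] at h
    exact (mul_eq_zero.mp h).resolve_left ha
  have hxNξ₂ : star x ⬝ᵥ N *ᵥ ξ₂ = 0 := by
    have h := hxS ξ₃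
    rw [hξ₃, dotProduct_add, dotProduct_smul, dotProduct_smul, hxNx, smul_zero, add_zero,
      smul_eq_mul] at h
    exact (mul_eq_zero.mp h).resolve_left hb
  have hξ₂Sξ₂ : star ξ₂ ⬝ᵥ S *ᵥ ξ₂ = 0 := by
    rw [hξ₂, dotProduct_smul, hN.star_dotProduct_mulVec, hxNξ₂, star_zero, smul_zero]
  have hSξ₂ : S *ᵥ ξ₂ = 0 := (hS.dotProduct_mulVec_zero_iff ξ₂).mp hξ₂Sξ₂
  rw [hξ₂] at hSξ₂
  exact (smul_eq_zero.mp hSξ₂).resolve_left ha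

end Matrix

lemma isHermitian_fromBlocks_one_neg_one {m 𝕜 : Type*} [DecidableEq m] [RCLike 𝕜] :
    (fromBlocks 1 0 0 (-1) : Matrix (m ⊕ m) (m ⊕ m) 𝕜).IsHermitian :=
  isHermitian_one.fromBlocks conjTranspose_zero isHermitian_one.neg

lemma fromBlocks_one_neg_one_mul_self {m R : Type*} [Fintype m] [DecidableEq m] [Ring R] :
    (fromBlocks 1 0 0 (-1) : Matrix (m ⊕ m) (m ⊕ m) R) * fromBlocks 1 0 0 (-1) = 1 := by
  simp [fromBlocks_multiply, fromBlocks_one]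

theorem stmt_5_general {D : ℕ}
    (S N : Matrix (Fin D ⊕ Fin D) (Fin D ⊕ Fin D) ℂ)
    (hS : S.PosSemidef)
    (hN : N = Matrix.fromBlocks 1 0 0 (-1))
    (x ξ₂ : Fin D ⊕ Fin D → ℂ) (hx0 : x ≠ 0) (hker : S.mulVec x = 0)
    (c : ℂ) (hc : c ≠ 0)
    (hchain : S.mulVec ξ₂ = (Complex.I * c) • N.mulVec x) :
    ¬ ∃ (ξ₃ : Fin D ⊕ Fin D → ℂ) (c' c'' : ℂ), c' ≠ 0 ∧
      S.mulVec ξ₃ =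
        (Complex.I * c') • N.mulVec ξ₂ + (Complex.I * c'') • N.mulVec x := by
  rintro ⟨ξ₃, c', c'', hc', hξ₃⟩
  subst hN
  have hNx := mulVec_eq_zero_of_jordan_chain hS isHermitian_fromBlocks_one_neg_one
    (mul_ne_zero Complex.I_ne_zero hc) (mul_ne_zero Complex.I_ne_zero hc') hker hchain hξ₃
  apply hx0
  rw [← one_mulVec x, ← fromBlocks_one_neg_one_mul_self, ← mulVec_mulVec, hNx, mulVec_zero]

theorem stmt_5 {D : ℕ} (hD : 0 < D)
    (S N : Matrix (Fin D ⊕ Fin D) (Fin D ⊕ Fin D) ℂ)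
    (hS : S.PosSemidef)
    (hN : N = Matrix.fromBlocks 1 0 0 (-1))
    (x ξ₂ : Fin D ⊕ Fin D → ℂ) (hx0 : x ≠ 0) (hker : S.mulVec x = 0)
    (c : ℂ) (hc : c ≠ 0)
    (hchain : S.mulVec ξ₂ = (Complex.I * c) • N.mulVec x) :
    ¬ ∃ (ξ₃ : Fin D ⊕ Fin D → ℂ) (c' c'' : ℂ), c' ≠ 0 ∧
      S.mulVec ξ₃ =
        (Complex.I * c') • N.mulVec ξ₂ + (Complex.I * c'') • N.mulVec x :=
  stmt_5_general S N hS hN x ξ₂ hx0 hker c hc hchain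
end

section
/- Let S be Hermitian positive-semidefinite and N = diag(I_D, -I_D). Then the generalized eigenspace of N·S at eigenvalue 0 satisfies Ker((N S)²) = Ker((N S)^k) for all k ≥ 2; equivalently, all Jordan blocks of N·S at eigenvalue 0 have size at most 2. -/
open Matrix
open scoped ComplexOrder

/-!
For `v ∈ ker (NS)³` put `b = NSv`. Since `(NS)ᴴ S (NS) = SNSNS = N (NS)³`, the quadratic form
`b† S b` vanishes, so positivity of `S` forces `S b = 0` and hence `(NS)² v = N S b = 0`.
Thus `ker (NS)³ = ker (NS)²`, and the kernels of higher powers stabilise from there on.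
-/

namespace Matrix

variable {n 𝕜 : Type*} [Fintype n] [RCLike 𝕜]

theorem PosSemidef.mul_mulVec_eq_zero_of_conjTranspose_mul_mul {m : Type*} [Fintype m]
    {S : Matrix m m 𝕜} (hS : S.PosSemidef) {A : Matrix m n 𝕜} {v : n → 𝕜}
    (h : (Aᴴ * S * A) *ᵥ v = 0) : (S * A) *ᵥ v = 0 := by
  rw [← mulVec_mulVec, ← hS.dotProduct_mulVec_zero_iff, star_mulVec, ← dotProduct_mulVec,
    mulVec_mulVec, mulVec_mulVec, h, dotProduct_zero]

variable [DecidableEq n]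

theorem pow_mulVec_eq_zero_iff_of_le {R : Type*} [Semiring R] {A : Matrix n n R} {k m : ℕ}
    (hA : ∀ v, (A ^ (k + 1)) *ᵥ v = 0 → (A ^ k) *ᵥ v = 0) (hkm : k ≤ m) (v : n → R) :
    (A ^ m) *ᵥ v = 0 ↔ (A ^ k) *ᵥ v = 0 := by
  constructor
  · induction m, hkm using Nat.le_induction generalizing v with
    | base => exact id
    | succ m _ ih =>
      intro hv
      rw [pow_succ, ← mulVec_mulVec] at hv
      exact hA v (by rw [pow_succ, ← mulVec_mulVec]; exact ih _ hv)
  · intro hv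
    rw [← Nat.sub_add_cancel hkm, pow_add, ← mulVec_mulVec, hv, mulVec_zero]

theorem PosSemidef.mul_pow_two_mulVec_eq_zero_of_pow_three {S N : Matrix n n 𝕜}
    (hS : S.PosSemidef) (hN : N.IsHermitian) (hNN : N * N = 1) {v : n → 𝕜}
    (h : ((N * S) ^ 3) *ᵥ v = 0) : ((N * S) ^ 2) *ᵥ v = 0 := by
  have hgram : (N * S)ᴴ * S * (N * S) = N * (N * S) ^ 3 := by
    rw [conjTranspose_mul, hS.1, hN.eq, pow_three, ← Matrix.mul_assoc N (N * S),
      ← Matrix.mul_assoc N N, hNN, Matrix.one_mul]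
    simp only [Matrix.mul_assoc]
  have hSNS : (S * (N * S)) *ᵥ v = 0 :=
    hS.mul_mulVec_eq_zero_of_conjTranspose_mul_mul (by rw [hgram, ← mulVec_mulVec, h, mulVec_zero])
  rw [pow_two, Matrix.mul_assoc, ← mulVec_mulVec, hSNS, mulVec_zero]

end Matrix

theorem stmt_14_general {D : ℕ}
    (S N : Matrix (Fin D ⊕ Fin D) (Fin D ⊕ Fin D) ℂ)
    (hS : S.PosSemidef)
    (hN : N = Matrix.fromBlocks 1 0 0 (-1)) :
    ∀ k : ℕ, 2 ≤ k → ∀ v : Fin D ⊕ Fin D → ℂ,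
      ((N * S) ^ k).mulVec v = 0 ↔ ((N * S) ^ 2).mulVec v = 0 := by
  have hN_herm : N.IsHermitian := by
    subst hN
    exact isHermitian_one.fromBlocks (by simp) isHermitian_one.neg
  have hNN : N * N = 1 := by
    simp [hN, fromBlocks_multiply, ← fromBlocks_one]
  intro k hk v
  exact pow_mulVec_eq_zero_iff_of_le
    (fun _ ↦ hS.mul_pow_two_mulVec_eq_zero_of_pow_three hN_herm hNN) hk v

theorem stmt_14 {D : ℕ} (hD : 0 < D)
    (S N : Matrix (Fin D ⊕ Fin D) (Fin D ⊕ Fin D) ℂ)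
    (hS : S.PosSemidef)
    (hN : N = Matrix.fromBlocks 1 0 0 (-1)) :
    ∀ k : ℕ, 2 ≤ k → ∀ v : Fin D ⊕ Fin D → ℂ,
      ((N * S) ^ k).mulVec v = 0 ↔ ((N * S) ^ 2).mulVec v = 0 :=
  stmt_14_general S N hS hN
end

section
/- Let S be Hermitian positive-semidefinite and N = diag(I_D, -I_D), and suppose ω ≠ 0 is real. Then N·S has no nontrivial Jordan block at eigenvalue ω; i.e., Ker((N S - ω I)²) = Ker(N S - ω I). -/
/-!
Put `A = N S - ω` and `w = A v`, so that `A w = 0`. As `N² = 1`, this says `(S - ω N) w = 0`;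
and `S - ω N = Aᴴ N`, so `w† N w = v† (S - ω N) w = 0`. Hence `w† S w = ω w† N w = 0`, positivity
of `S` gives `S w = 0`, then `ω N w = 0`, and `w = 0` because `ω ≠ 0` and `N` is invertible.
-/

open Matrix
open scoped ComplexOrder

namespace Matrix

variable {𝕜 n : Type*} [RCLike 𝕜] [Fintype n] [DecidableEq n] {N S : Matrix n n 𝕜}

theorem mul_mul_sub_smul_one (hNN : N * N = 1) (c : 𝕜) :
    N * (N * S - c • 1) = S - c • N := by
  rw [mul_sub, ← mul_assoc, hNN, one_mul, mul_smul_comm, mul_one]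

theorem conjTranspose_mul_sub_smul_one_mul (hN : N.IsHermitian) (hNN : N * N = 1)
    (hS : S.IsHermitian) (ω : ℝ) :
    (N * S - (ω : 𝕜) • 1)ᴴ * N = S - (ω : 𝕜) • N := by
  calc (N * S - (ω : 𝕜) • 1)ᴴ * N = (N * (N * S - (ω : 𝕜) • 1))ᴴ := by
        rw [conjTranspose_mul, hN.eq]
    _ = S - (ω : 𝕜) • N := by
        rw [mul_mul_sub_smul_one hNN, conjTranspose_sub, conjTranspose_smul, hS.eq, hN.eq,
          RCLike.star_def, RCLike.conj_ofReal]

theorem mulVec_sub_smul_one_eq_zero_of_sq (hN : N.IsHermitian) (hNN : N * N = 1)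
    (hS : S.PosSemidef) {ω : ℝ} (hω : ω ≠ 0) {v : n → 𝕜}
    (hv : (N * S - (ω : 𝕜) • 1) *ᵥ (N * S - (ω : 𝕜) • 1) *ᵥ v = 0) :
    (N * S - (ω : 𝕜) • 1) *ᵥ v = 0 := by
  set A := N * S - (ω : 𝕜) • 1
  set w := A *ᵥ v
  have hBw : (S - (ω : 𝕜) • N) *ᵥ w = 0 := by
    rw [← mul_mul_sub_smul_one hNN, ← mulVec_mulVec, hv, mulVec_zero]
  have hwNw : star w ⬝ᵥ N *ᵥ w = 0 := by
    rw [star_mulVec, ← dotProduct_mulVec, mulVec_mulVec,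
      conjTranspose_mul_sub_smul_one_mul hN hNN hS.1, hBw, dotProduct_zero]
  have hSw : S *ᵥ w = 0 := by
    rw [← hS.dotProduct_mulVec_zero_iff]
    have : S *ᵥ w = (ω : 𝕜) • N *ᵥ w := by
      rwa [sub_mulVec, smul_mulVec, sub_eq_zero] at hBw
    rw [this, dotProduct_smul, hwNw, smul_zero]
  have hNw : N *ᵥ w = 0 := by
    rwa [sub_mulVec, hSw, zero_sub, neg_eq_zero, smul_mulVec, smul_eq_zero,
      or_iff_right (by exact_mod_cast hω)] at hBw
  rw [← one_mulVec w, ← hNN, ← mulVec_mulVec, hNw, mulVec_zero]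

end Matrix

theorem stmt_16_general {D : ℕ}
    (S N : Matrix (Fin D ⊕ Fin D) (Fin D ⊕ Fin D) ℂ)
    (hS : S.PosSemidef)
    (hN : N = Matrix.fromBlocks 1 0 0 (-1))
    (ω : ℝ) (hω : ω ≠ 0) :
    ∀ v : Fin D ⊕ Fin D → ℂ,
      ((N * S - (ω : ℂ) • 1) ^ 2).mulVec v = 0 ↔
        (N * S - (ω : ℂ) • 1).mulVec v = 0 := by
  have hNH : N.IsHermitian := by
    simp [hN, IsHermitian, fromBlocks_conjTranspose]
  have hNN : N * N = 1 := by
    simp [hN, fromBlocks_multiply]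
  intro v
  rw [sq, ← mulVec_mulVec]
  exact ⟨mulVec_sub_smul_one_eq_zero_of_sq hNH hNN hS hω, fun hv => by rw [hv, mulVec_zero]⟩

theorem stmt_16 {D : ℕ} (hD : 0 < D)
    (S N : Matrix (Fin D ⊕ Fin D) (Fin D ⊕ Fin D) ℂ)
    (hS : S.PosSemidef)
    (hN : N = Matrix.fromBlocks 1 0 0 (-1))
    (ω : ℝ) (hω : ω ≠ 0) :
    ∀ v : Fin D ⊕ Fin D → ℂ,
      ((N * S - (ω : ℂ) • 1) ^ 2).mulVec v = 0 ↔
        (N * S - (ω : ℂ) • 1).mulVec v = 0 :=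
  stmt_16_general S N hS hN ω hω
end

section
/- Let N = diag(I_D, -I_D) and Σ_x = [[0,I_D],[I_D,0]]. Suppose S is Hermitian, positive-semidefinite, and satisfies Σ_x S* Σ_x = S. If x ∈ Ker(S), then Σ_x x* ∈ Ker(S), and if additionally S ξ = i c N x (c ≠ 0), then S (Σ_x ξ*) = i c̄ N (Σ_x x*); i.e., Jordan chains at eigenvalue 0 map to Jordan chains under the duality v ↦ Σ_x v*. -/
/-!
The antiunitary map `v ↦ Σₓ v*` intertwines `S` with itself, because `Σₓ² = 1` turns
`Σₓ S* Σₓ = S` into `S Σₓ = Σₓ S*`. Hence it preserves `Ker S`. Applied to `S ξ = i c N x` it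
conjugates the scalar to `-i c̄` and, since `N` is real and anticommutes with `Σₓ`, produces
`i c̄ N (Σₓ x*)`.
-/

open Matrix
open scoped ComplexOrder

namespace Matrix

section Conjugation

variable {m n R : Type*} [Fintype n] [CommSemiring R] [StarRing R]

theorem map_starRingEnd_mulVec_star (A : Matrix m n R) (v : n → R) :
    A.map (starRingEnd R) *ᵥ star v = star (A *ᵥ v) :=
  funext fun i => ((starRingEnd R).map_mulVec A v i).symm

theorem mulVec_mulVec_star_of_mul_map_mul_eq [DecidableEq n] {P A : Matrix n n R}
    (hP : P * P = 1) (hA : P * A.map (starRingEnd R) * P = A) (v : n → R) :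
    A *ᵥ (P *ᵥ star v) = P *ᵥ star (A *ᵥ v) := by
  have hAP : A * P = P * A.map (starRingEnd R) := by
    conv_lhs => rw [← hA]
    rw [mul_assoc _ P P, hP, mul_one]
  rw [mulVec_mulVec, hAP, ← mulVec_mulVec, map_starRingEnd_mulVec_star]

end Conjugation

section Blocks

variable {m α : Type*} [DecidableEq m] [Fintype m] [Ring α]

theorem fromBlocks_zero_one_one_zero_mul_self :
    fromBlocks 0 1 1 0 * fromBlocks 0 1 1 0 = (1 : Matrix (m ⊕ m) (m ⊕ m) α) := by
  simp [fromBlocks_multiply, fromBlocks_one]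

theorem fromBlocks_zero_one_one_zero_mul_fromBlocks_one_zero_zero_neg_one :
    fromBlocks 0 1 1 0 * fromBlocks 1 0 0 (-1) =
      -(fromBlocks 1 0 0 (-1) * fromBlocks 0 1 1 0 : Matrix (m ⊕ m) (m ⊕ m) α) := by
  simp [fromBlocks_multiply, fromBlocks_neg]

end Blocks

theorem fromBlocks_one_zero_zero_neg_one_map_starRingEnd {m α : Type*} [DecidableEq m]
    [CommRing α] [StarRing α] :
    (fromBlocks (1 : Matrix m m α) 0 0 (-1 : Matrix m m α)).map (starRingEnd α) =
      fromBlocks 1 0 0 (-1) := by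
  simp [fromBlocks_map, Matrix.map_neg _ (map_neg (starRingEnd α))]

end Matrix

theorem stmt_19_general {D : ℕ}
    (S N Sx : Matrix (Fin D ⊕ Fin D) (Fin D ⊕ Fin D) ℂ)
    (hN : N = Matrix.fromBlocks 1 0 0 (-1))
    (hSx : Sx = Matrix.fromBlocks 0 1 1 0)
    (hsym : Sx * S.map (starRingEnd ℂ) * Sx = S)
    (x : Fin D ⊕ Fin D → ℂ) (hker : S.mulVec x = 0) :
    S.mulVec (Sx.mulVec (star x)) = 0 ∧
      ∀ (ξ : Fin D ⊕ Fin D → ℂ) (c : ℂ), c ≠ 0 →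
        S.mulVec ξ = (Complex.I * c) • N.mulVec x →
        S.mulVec (Sx.mulVec (star ξ)) =
          (Complex.I * (starRingEnd ℂ) c) • N.mulVec (Sx.mulVec (star x)) := by
  have hSx2 : Sx * Sx = 1 := hSx ▸ fromBlocks_zero_one_one_zero_mul_self
  have hdual := mulVec_mulVec_star_of_mul_map_mul_eq hSx2 hsym
  have hNstar (v : Fin D ⊕ Fin D → ℂ) : star (N *ᵥ v) = N *ᵥ star v := by
    rw [← map_starRingEnd_mulVec_star, hN, fromBlocks_one_zero_zero_neg_one_map_starRingEnd]
  have hanti : Sx * N = -(N * Sx) :=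
    hN ▸ hSx ▸ fromBlocks_zero_one_one_zero_mul_fromBlocks_one_zero_zero_neg_one
  have hscalar (c : ℂ) : star (Complex.I * c) = -(Complex.I * starRingEnd ℂ c) := by
    simp [mul_comm]
  refine ⟨by rw [hdual, hker, star_zero, mulVec_zero], fun ξ c _ hξ => ?_⟩
  rw [hdual, hξ, star_smul, hNstar, mulVec_smul, mulVec_mulVec, hanti, neg_mulVec,
    ← mulVec_mulVec, hscalar, smul_neg, neg_smul, neg_neg]

theorem stmt_19 {D : ℕ} (hD : 0 < D)
    (S N Sx : Matrix (Fin D ⊕ Fin D) (Fin D ⊕ Fin D) ℂ)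
    (hS : S.PosSemidef)
    (hN : N = Matrix.fromBlocks 1 0 0 (-1))
    (hSx : Sx = Matrix.fromBlocks 0 1 1 0)
    (hsym : Sx * S.map (starRingEnd ℂ) * Sx = S)
    (x : Fin D ⊕ Fin D → ℂ) (hker : S.mulVec x = 0) :
    S.mulVec (Sx.mulVec (star x)) = 0 ∧
      ∀ (ξ : Fin D ⊕ Fin D → ℂ) (c : ℂ), c ≠ 0 →
        S.mulVec ξ = (Complex.I * c) • N.mulVec x →
        S.mulVec (Sx.mulVec (star ξ)) =
          (Complex.I * (starRingEnd ℂ) c) • N.mulVec (Sx.mulVec (star x)) :=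
  stmt_19_general S N Sx hN hSx hsym x hker
end
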